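/- Fix positive real parameters K1, K2, K3, Nx, Ny, Nz and define y*(L) by the explicit formula. Then Ny − y*(L) converges to min(Nx, Ny) as L → +∞. -/

import Mathlib

/-! Put `u = 1 / (K2 (K3 L + 1))`, which tends to `0` as `L → ∞`. Pulling the factor
`K2 (K3 L + 1)` out of `√Δ2` turns `y*` into `(Ny - Nx - u + √((Nx - Ny + u)² + 4 Ny u)) / 2`,
an expression continuous in `u`, whose value at `u = 0` is `(Ny - Nx + |Nx - Ny|) / 2`;
hence `Ny - y*` tends to `(Nx + Ny - |Nx - Ny|) / 2 = min Nx Ny`. -/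

noncomputable def delta2 (K2 K3 Nx Ny L : ℝ) : ℝ :=
  4*K2*Ny*(K3*L + 1) + (K2*(Nx - Ny)*(K3*L + 1) + 1)^2

noncomputable def ystar (K2 K3 Nx Ny L : ℝ) : ℝ :=
  (-1 + K2*(Ny - Nx)*(K3*L + 1) + Real.sqrt (delta2 K2 K3 Nx Ny L)) / (2*K2*(K3*L + 1))

open Filter Topology

noncomputable def ystarOfInv (Nx Ny u : ℝ) : ℝ :=
  (Ny - Nx - u + Real.sqrt ((Nx - Ny + u)^2 + 4*Ny*u)) / 2

lemma root_eq_ystarOfInv (Nx Ny : ℝ) {s : ℝ} (hs : 0 < s) :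
    (-1 + (Ny - Nx)*s + Real.sqrt (4*Ny*s + ((Nx - Ny)*s + 1)^2)) / (2*s)
      = ystarOfInv Nx Ny s⁻¹ := by
  have hdisc : 4*Ny*s + ((Nx - Ny)*s + 1)^2 = s^2 * ((Nx - Ny + s⁻¹)^2 + 4*Ny*s⁻¹) := by
    field_simp
    ring
  rw [ystarOfInv, hdisc, Real.sqrt_mul (sq_nonneg s), Real.sqrt_sq hs.le]
  field_simp
  ring

lemma ystar_eq_ystarOfInv (K2 K3 Nx Ny L : ℝ) (h : 0 < K2*(K3*L + 1)) :
    ystar K2 K3 Nx Ny L = ystarOfInv Nx Ny (K2*(K3*L + 1))⁻¹ := by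
  have hdelta : delta2 K2 K3 Nx Ny L
      = 4*Ny*(K2*(K3*L + 1)) + ((Nx - Ny)*(K2*(K3*L + 1)) + 1)^2 := by
    rw [delta2]
    ring
  rw [← root_eq_ystarOfInv Nx Ny h, ystar, hdelta]
  ring

lemma continuous_ystarOfInv (Nx Ny : ℝ) : Continuous (ystarOfInv Nx Ny) := by
  unfold ystarOfInv
  fun_prop

lemma sub_ystarOfInv_zero (Nx Ny : ℝ) : Ny - ystarOfInv Nx Ny 0 = min Nx Ny := by
  have hsqrt : Real.sqrt ((Nx - Ny + 0)^2 + 4*Ny*0) = |Nx - Ny| := by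
    simpa using Real.sqrt_sq_eq_abs (Nx - Ny)
  rw [ystarOfInv, hsqrt]
  linarith [min_add_max Nx Ny, max_sub_min_eq_abs' Nx Ny]

lemma tendsto_inv_mul_add_one_atTop {K2 K3 : ℝ} (hK2 : 0 < K2) (hK3 : 0 < K3) :
    Tendsto (fun L : ℝ => (K2*(K3*L + 1))⁻¹) atTop (𝓝 0) :=
  tendsto_inv_atTop_zero.comp <| (tendsto_atTop_add_const_right _ 1
    (tendsto_id.const_mul_atTop hK3)).const_mul_atTop hK2

theorem il7r_ny_sub_ystar_tendsto_general
    (K2 K3 Nx Ny : ℝ)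
    (hK2 : 0 < K2) (hK3 : 0 < K3) :
    Filter.Tendsto (fun L : ℝ => Ny - ystar K2 K3 Nx Ny L)
      Filter.atTop (nhds (min Nx Ny)) := by
  have hlim : Tendsto (fun L : ℝ => Ny - ystarOfInv Nx Ny (K2*(K3*L + 1))⁻¹)
      atTop (𝓝 (min Nx Ny)) := by
    rw [← sub_ystarOfInv_zero]
    exact tendsto_const_nhds.sub
      ((continuous_ystarOfInv Nx Ny).tendsto 0 |>.comp (tendsto_inv_mul_add_one_atTop hK2 hK3))
  refine hlim.congr' ?_
  filter_upwards [eventually_ge_atTop 0] with L hL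
  rw [ystar_eq_ystarOfInv K2 K3 Nx Ny L (by positivity)]

/-- `Ny − y*(L)` converges to `min Nx Ny` as `L → +∞`. -/
theorem il7r_ny_sub_ystar_tendsto
    (K1 K2 K3 Nx Ny Nz : ℝ)
    (hK1 : 0 < K1) (hK2 : 0 < K2) (hK3 : 0 < K3)
    (hNx : 0 < Nx) (hNy : 0 < Ny) (hNz : 0 < Nz) :
    Filter.Tendsto (fun L : ℝ => Ny - ystar K2 K3 Nx Ny L)
      Filter.atTop (nhds (min Nx Ny)) :=
  il7r_ny_sub_ystar_tendsto_general K2 K3 Nx Ny hK2 hK3
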